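/- arXiv:2011.14692 — 5 statements merged into one kernel-verified Lean document; each statement's English description precedes it below -/
import Mathlib

section
/- Let m ≥ 2 be an integer and a_1,…,a_m homogeneous ideals of the standard graded polynomial ring S = k[α_0,…,α_n]. Suppose that for all 1 ≤ i < j ≤ m there is a positive integer d_{ij} such that every homogeneous polynomial of degree d_{ij} lies in a_i + a_j. Then the saturation of the product a_1·a_2·⋯·a_m with respect to the irrelevant ideal m = (α_0,…,α_n) equals the saturation of the intersection a_1 ∩ a_2 ∩ ⋯ ∩ a_m. -/
/-!
If `𝔪^D ⊆ a + b`, then `𝔪^D (a ∩ b) ⊆ (a + b)(a ∩ b) ⊆ ab`, so `ab` and `a ∩ b` have the same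
saturation. Condition (∗) on `a + b` yields such a `D`, since `𝔪^d` is generated by monomials of
degree `d`. The pairwise hypothesis passes to `(a₁ ⋯ aⱼ₋₁) + aⱼ` because `(a + c)(b + c) ⊆ ab + c`,
and saturation commutes with finite intersections, so induction on the number of ideals concludes.
-/

open MvPolynomial

/-- The irrelevant ideal `(α₀, …, αₙ)` of `S = k[α₀, …, αₙ]`. -/
noncomputable def irrel (k : Type*) [Field k] (n : ℕ) :
    Ideal (MvPolynomial (Fin (n+1)) k) := Ideal.span (Set.range X)

/-- The saturation of an ideal with respect to the irrelevant ideal: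
`sat a = {f | ∃ N, 𝔪^N · f ⊆ a}`. -/
noncomputable def sat (k : Type*) [Field k] (n : ℕ)
    (a : Ideal (MvPolynomial (Fin (n+1)) k)) : Ideal (MvPolynomial (Fin (n+1)) k) :=
  ⨆ N : ℕ, Submodule.colon a (((irrel k n) ^ N : Ideal (MvPolynomial (Fin (n+1)) k)) : Set (MvPolynomial (Fin (n+1)) k))

attribute [local instance] MvPolynomial.gradedAlgebra

/-- Condition (∗): there is a positive integer `d` such that every homogeneous
polynomial of degree `d` lies in `c`. -/
def condStar (k : Type*) [Field k] (n : ℕ) (c : Ideal (MvPolynomial (Fin (n+1)) k)) : Prop :=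
  ∃ d : ℕ, 0 < d ∧ ∀ f : MvPolynomial (Fin (n+1)) k, f.IsHomogeneous d → f ∈ c

open scoped Pointwise

namespace Ideal

variable {R : Type*} [CommSemiring R]

theorem sup_mul_sup_le (a b c : Ideal R) : (a ⊔ c) * (b ⊔ c) ≤ a * b ⊔ c := by
  rw [mul_sup, sup_mul, sup_mul]
  exact sup_le (sup_le le_sup_left (mul_le_left.trans le_sup_right))
    (sup_le (mul_le_right.trans le_sup_right) (mul_le_right.trans le_sup_right))

theorem sup_mul_inf_le (a b : Ideal R) : (a ⊔ b) * (a ⊓ b) ≤ a * b := by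
  rw [sup_mul]
  exact sup_le (mul_mono_right inf_le_right) (mul_comm b a ▸ mul_mono_right inf_le_left)

theorem exists_pow_le_prod_sup {ι : Type*} (I c : Ideal R) (a : ι → Ideal R) (s : Finset ι)
    (h : ∀ i ∈ s, ∃ d : ℕ, I ^ d ≤ a i ⊔ c) : ∃ D : ℕ, I ^ D ≤ (∏ i ∈ s, a i) ⊔ c := by
  classical
  induction s using Finset.induction_on with
  | empty => exact ⟨0, by simp [one_eq_top]⟩
  | insert j s hj ih =>
    obtain ⟨d, hd⟩ := h j (Finset.mem_insert_self j s)
    obtain ⟨D, hD⟩ := ih fun i hi => h i (Finset.mem_insert_of_mem hi)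
    refine ⟨d + D, ?_⟩
    rw [pow_add, Finset.prod_insert hj]
    exact (mul_mono hd hD).trans (sup_mul_sup_le _ _ _)

def saturation (I a : Ideal R) : Ideal R :=
  ⨆ N : ℕ, a.colon ((I ^ N : Ideal R) : Set R)

variable {I a b : Ideal R}

theorem mem_saturation_iff {f : R} :
    f ∈ I.saturation a ↔ ∃ N : ℕ, ∀ g ∈ I ^ N, f * g ∈ a := by
  have hmono : Monotone fun N : ℕ => a.colon ((I ^ N : Ideal R) : Set R) :=
    fun N M hNM => Submodule.colon_mono le_rfl (pow_le_pow_right hNM)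
  simp only [saturation, Submodule.mem_iSup_of_directed _ hmono.directed_le,
    Submodule.mem_colon, SetLike.mem_coe, smul_eq_mul]

theorem saturation_mono (h : a ≤ b) : I.saturation a ≤ I.saturation b :=
  iSup_mono fun _ => Submodule.colon_mono h le_rfl

theorem saturation_inf : I.saturation (a ⊓ b) = I.saturation a ⊓ I.saturation b := by
  refine le_antisymm (le_inf (saturation_mono inf_le_left) (saturation_mono inf_le_right)) ?_
  rintro f ⟨hfa, hfb⟩
  obtain ⟨N, hN⟩ := mem_saturation_iff.1 hfa
  obtain ⟨M, hM⟩ := mem_saturation_iff.1 hfb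
  exact mem_saturation_iff.2 ⟨max N M, fun g hg =>
    ⟨hN g (pow_le_pow_right (le_max_left N M) hg), hM g (pow_le_pow_right (le_max_right N M) hg)⟩⟩

theorem saturation_mul_of_pow_le_sup {D : ℕ} (h : I ^ D ≤ a ⊔ b) :
    I.saturation (a * b) = I.saturation (a ⊓ b) := by
  refine le_antisymm (saturation_mono mul_le_inf) fun f hf => ?_
  obtain ⟨N, hN⟩ := mem_saturation_iff.1 hf
  refine mem_saturation_iff.2 ⟨D + N, fun g hg => ?_⟩
  rw [pow_add] at hg
  refine Submodule.mul_induction_on hg (fun r hr s hs => ?_) fun x y hx hy => ?_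
  · rw [mul_left_comm]
    exact sup_mul_inf_le a b (mul_mem_mul (h hr) (hN s hs))
  · rw [mul_add]
    exact add_mem hx hy

theorem saturation_prod_eq_saturation_iInf {ι : Type*} (a : ι → Ideal R) (s : Finset ι)
    (h : ∀ i ∈ s, ∀ j ∈ s, i ≠ j → ∃ d : ℕ, I ^ d ≤ a i ⊔ a j) :
    I.saturation (∏ i ∈ s, a i) = I.saturation (⨅ i ∈ s, a i) := by
  classical
  induction s using Finset.induction_on with
  | empty => simp
  | insert j s hj ih =>
    obtain ⟨D, hD⟩ := exists_pow_le_prod_sup I (a j) a s fun i hi =>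
      h i (Finset.mem_insert_of_mem hi) j (Finset.mem_insert_self j s) (ne_of_mem_of_not_mem hi hj)
    rw [Finset.prod_insert hj, Finset.iInf_insert, mul_comm, saturation_mul_of_pow_le_sup hD,
      saturation_inf, saturation_inf, inf_comm,
      ih fun i hi j' hj' => h i (Finset.mem_insert_of_mem hi) j' (Finset.mem_insert_of_mem hj')]

end Ideal

theorem MvPolynomial.span_X_pow_le_span_isHomogeneous {σ R : Type*} [CommSemiring R] (d : ℕ) :
    Ideal.span (Set.range (X : σ → MvPolynomial σ R)) ^ d ≤
      Ideal.span {f | f.IsHomogeneous d} := by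
  rw [Ideal.span, Submodule.span_pow]
  refine Submodule.span_mono fun f hf => ?_
  induction d generalizing f with
  | zero =>
    rw [pow_zero, Set.mem_one] at hf
    exact hf ▸ isHomogeneous_one σ R
  | succ d ih =>
    rw [pow_succ] at hf
    obtain ⟨g, hg, _, ⟨i, rfl⟩, rfl⟩ := hf
    exact (ih g hg).mul (isHomogeneous_X R i)

theorem condStar.exists_irrel_pow_le {k : Type*} [Field k] {n : ℕ}
    {c : Ideal (MvPolynomial (Fin (n+1)) k)} (h : condStar k n c) :
    ∃ d : ℕ, irrel k n ^ d ≤ c := by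
  obtain ⟨d, -, hd⟩ := h
  exact ⟨d, (span_X_pow_le_span_isHomogeneous d).trans (Ideal.span_le.2 hd)⟩

theorem sat_eq_saturation {k : Type*} [Field k] {n : ℕ} (a : Ideal (MvPolynomial (Fin (n+1)) k)) :
    sat k n a = (irrel k n).saturation a :=
  rfl

theorem sat_prod_eq_sat_inf_general (k : Type*) [Field k]
    (n : ℕ) (m : ℕ)
    (a : ℕ → Ideal (MvPolynomial (Fin (n+1)) k))
    (h : ∀ i j, 1 ≤ i → i < j → j ≤ m → condStar k n (a i + a j)) :
    sat k n (∏ i ∈ Finset.Icc 1 m, a i) = sat k n (⨅ i ∈ Finset.Icc 1 m, a i) := by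
  rw [sat_eq_saturation, sat_eq_saturation]
  refine (irrel k n).saturation_prod_eq_saturation_iInf a _ fun i hi j hj hij => ?_
  rw [Finset.mem_Icc] at hi hj
  rcases hij.lt_or_gt with hlt | hgt
  · exact (h i j hi.1 hlt hj.2).exists_irrel_pow_le
  · rw [sup_comm]
    exact (h j i hj.1 hgt hi.2).exists_irrel_pow_le

theorem sat_prod_eq_sat_inf (k : Type*) [Field k] [IsAlgClosed k]
    (n : ℕ) (hn : 0 < n) (m : ℕ) (hm : 2 ≤ m)
    (a : ℕ → Ideal (MvPolynomial (Fin (n+1)) k))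
    (ha : ∀ i, 1 ≤ i → i ≤ m → (a i).IsHomogeneous (homogeneousSubmodule (Fin (n+1)) k))
    (h : ∀ i j, 1 ≤ i → i < j → j ≤ m → condStar k n (a i + a j)) :
    sat k n (∏ i ∈ Finset.Icc 1 m, a i) = sat k n (⨅ i ∈ Finset.Icc 1 m, a i) :=
  sat_prod_eq_sat_inf_general k n m a h
end

section
/- Let I be a homogeneous ideal of the standard graded polynomial ring S = k[α_0,…,α_n] and k a positive integer. Then there exists an integer d_0 such that for all integers d_1,…,d_k ≥ d_0, every element of the graded piece (I^k)_{d_1+⋯+d_k} is a k-linear combination of products f_1·f_2·⋯·f_k with f_i ∈ I_{d_i} for each i; that is, the multiplication map I_{d_1} ⊗ ⋯ ⊗ I_{d_k} → (I^k)_{d_1+⋯+d_k} is surjective. -/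
open MvPolynomial

attribute [local instance] MvPolynomial.gradedAlgebra

/-!
Noetherianity gives finitely many homogeneous generators of `I`, all of degree at most some `d₀`.
Then `(I ^ K)_D` is spanned by the homogeneous elements `X^μ * g₁ ⋯ g_K` of degree `D` with
generators `gᵢ`. When `D = d₁ + ⋯ + d_K` with every `dᵢ ≥ d₀`, the exponent `μ` has degree
`∑ (dᵢ - deg gᵢ)` and so splits as `μ = ∑ τᵢ` with `deg τᵢ = dᵢ - deg gᵢ`; the factorisation
`X^μ * ∏ gᵢ = ∏ (X^τᵢ * gᵢ)` then has its `i`-th factor in `I_{dᵢ}`.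
-/

theorem Finsupp.exists_sum_eq_of_degree_eq_sum {ι σ : Type*} (s : Finset ι) (a : ι → ℕ)
    (μ : σ →₀ ℕ) (hμ : μ.degree = ∑ i ∈ s, a i) :
    ∃ τ : ι → σ →₀ ℕ, (∀ i ∈ s, (τ i).degree = a i) ∧ ∑ i ∈ s, τ i = μ := by
  classical
  induction s using Finset.induction_on generalizing μ with
  | empty =>
    exact ⟨0, by simp, by simpa using ((degree_eq_zero_iff μ).mp (by simpa using hμ)).symm⟩
  | insert j s hj ih =>
    rw [Finset.sum_insert hj] at hμ
    obtain ⟨ν, hνμ, hν⟩ := exists_le_degree_eq μ (a j) (by omega)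
    obtain ⟨ρ, rfl⟩ := le_iff_exists_add.mp hνμ
    obtain ⟨τ, hτ, rfl⟩ := ih ρ (by rw [map_add] at hμ; omega)
    refine ⟨Function.update τ j ν, fun i hi => ?_, ?_⟩
    · rcases Finset.mem_insert.mp hi with rfl | hi
      · simpa using hν
      · rw [Function.update_of_ne (ne_of_mem_of_not_mem hi hj)]
        exact hτ i hi
    · rw [Finset.sum_insert hj, Finset.sum_update_of_notMem hj, Function.update_self]

namespace MvPolynomial

variable {σ R : Type*} [CommSemiring R]

theorem mem_span_image_of_isHomogeneous {ι : Type*} {v : ι → MvPolynomial σ R} {deg : ι → ℕ}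
    (hv : ∀ i, (v i).IsHomogeneous (deg i)) {f : MvPolynomial σ R}
    (hf : f ∈ Submodule.span R (Set.range v)) {D : ℕ} (hfD : f.IsHomogeneous D) :
    f ∈ Submodule.span R (v '' {i | deg i = D}) := by
  have hcomp := Submodule.mem_map_of_mem (f := homogeneousComponent D) hf
  rw [Submodule.map_span, ← Set.range_comp, homogeneousComponent_of_mem hfD, if_pos rfl] at hcomp
  refine Submodule.span_le.2 ?_ hcomp
  rintro _ ⟨i, rfl⟩
  rw [Function.comp_apply, homogeneousComponent_of_mem (hv i)]
  split_ifs with h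
  · exact Submodule.subset_span ⟨i, h.symm, rfl⟩
  · exact Submodule.zero_mem _

theorem mem_span_monomial_mul_prod_of_mem_span_pow {G : Set (MvPolynomial σ R)} {K : ℕ}
    {f : MvPolynomial σ R} (hf : f ∈ Ideal.span G ^ K) :
    f ∈ Submodule.span R
      (Set.range fun x : (σ →₀ ℕ) × (Fin K → G) =>
        monomial x.1 1 * ∏ i, (x.2 i : MvPolynomial σ R)) := by
  have hmon : Submodule.span R (Set.range fun μ : σ →₀ ℕ => monomial μ (1 : R)) = ⊤ := by
    simpa only [coe_basisMonomials] using (basisMonomials σ R).span_eq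
  rw [Ideal.span, Submodule.span_pow] at hf
  rw [← Submodule.restrictScalars_mem R, ← Submodule.span_smul_of_span_eq_top hmon] at hf
  refine Submodule.span_mono ?_ hf
  rintro _ ⟨_, ⟨μ, rfl⟩, t, ht, rfl⟩
  obtain ⟨g, rfl⟩ := Set.mem_pow.mp ht
  exact ⟨(μ, g), by simp [List.prod_ofFn, smul_eq_mul]⟩

theorem mem_span_prod_of_mem_span_pow {G : Set (MvPolynomial σ R)} {d₀ : ℕ}
    (hG : ∀ g ∈ G, ∃ e ≤ d₀, g.IsHomogeneous e) {K : ℕ} {d : Fin K → ℕ} (hd : ∀ i, d₀ ≤ d i)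
    {f : MvPolynomial σ R} (hf : f ∈ Ideal.span G ^ K) (hfd : f.IsHomogeneous (∑ i, d i)) :
    f ∈ Submodule.span R {p | ∃ h : Fin K → MvPolynomial σ R,
      (∀ i, h i ∈ Ideal.span G ∧ (h i).IsHomogeneous (d i)) ∧ p = ∏ i, h i} := by
  choose e he hGe using hG
  let deg : (σ →₀ ℕ) × (Fin K → G) → ℕ := fun x => x.1.degree + ∑ i, e _ (x.2 i).2
  have hv : ∀ x : (σ →₀ ℕ) × (Fin K → G),
      (monomial x.1 (1 : R) * ∏ i, (x.2 i : MvPolynomial σ R)).IsHomogeneous (deg x) := fun x =>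
    (isHomogeneous_monomial 1 rfl).mul (IsHomogeneous.prod _ _ _ fun i _ => hGe _ (x.2 i).2)
  refine Submodule.span_mono ?_ <|
    mem_span_image_of_isHomogeneous hv (mem_span_monomial_mul_prod_of_mem_span_pow hf) hfd
  rintro _ ⟨⟨μ, g⟩, hdeg, rfl⟩
  have hle : ∀ i, e _ (g i).2 ≤ d i := fun i => (he _ (g i).2).trans (hd i)
  obtain ⟨τ, hτ, rfl⟩ := Finsupp.exists_sum_eq_of_degree_eq_sum Finset.univ
      (fun i => d i - e _ (g i).2) μ (by
    rw [Finset.sum_tsub_distrib _ fun i _ => hle i]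
    simp only [Set.mem_ofPred_eq, deg] at hdeg
    omega)
  refine ⟨fun i => monomial (τ i) 1 * (g i : MvPolynomial σ R), fun i => ⟨?_, ?_⟩, ?_⟩
  · exact Ideal.mul_mem_left _ _ (Ideal.subset_span (g i).2)
  · simpa only [Nat.sub_add_cancel (hle i)] using
      (isHomogeneous_monomial 1 (hτ i (Finset.mem_univ i))).mul (hGe _ (g i).2)
  · rw [Finset.prod_mul_distrib, ← monomial_sum_one]

theorem _root_.Ideal.IsHomogeneous.exists_span_eq_of_fg {I : Ideal (MvPolynomial σ R)}
    (hI : I.IsHomogeneous (homogeneousSubmodule σ R)) (hfg : I.FG) :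
    ∃ (G : Set (MvPolynomial σ R)) (d₀ : ℕ),
      Ideal.span G = I ∧ ∀ g ∈ G, ∃ e ≤ d₀, g.IsHomogeneous e := by
  have hspan : Ideal.span {x | x ∈ I ∧ ∃ m, x.IsHomogeneous m} = I := by
    refine le_antisymm (Ideal.span_le.2 fun x hx => hx.1) ?_
    conv_lhs => rw [← hI.toIdeal_homogeneousCore_eq_self]
    refine Ideal.span_mono ?_
    rintro _ ⟨⟨x, m, hx⟩, hxI, rfl⟩
    exact ⟨hxI, m, hx⟩
  obtain ⟨s, hsH, hs⟩ := (Submodule.fg_span_iff_fg_span_finset_subset _).1 (hspan ▸ hfg)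
  choose! e he using fun g (hg : g ∈ (s : Set (MvPolynomial σ R))) => (hsH hg).2
  exact ⟨s, s.sup e, hs.symm.trans hspan, fun g hg => ⟨e g, Finset.le_sup hg, he g hg⟩⟩

end MvPolynomial

theorem power_multiplication_surjective_in_large_degrees_general
    (k : Type*) [Field k] (n : ℕ)
    (I : Ideal (MvPolynomial (Fin (n+1)) k))
    (hI : I.IsHomogeneous (homogeneousSubmodule (Fin (n+1)) k))
    (K : ℕ) :
    ∃ d₀ : ℕ, ∀ d : Fin K → ℕ, (∀ i, d₀ ≤ d i) →
      ∀ f ∈ I ^ K, f.IsHomogeneous (∑ i, d i) →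
        f ∈ Submodule.span k {g : MvPolynomial (Fin (n+1)) k |
          ∃ h : Fin K → MvPolynomial (Fin (n+1)) k,
            (∀ i, h i ∈ I ∧ (h i).IsHomogeneous (d i)) ∧ g = ∏ i, h i} := by
  obtain ⟨G, d₀, rfl, hG⟩ := hI.exists_span_eq_of_fg (IsNoetherian.noetherian I)
  exact ⟨d₀, fun d hd f hf hfd => mem_span_prod_of_mem_span_pow hG hd hf hfd⟩

theorem power_multiplication_surjective_in_large_degrees
    (k : Type*) [Field k] [IsAlgClosed k] (n : ℕ) (hn : 0 < n)
    (I : Ideal (MvPolynomial (Fin (n+1)) k))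
    (hI : I.IsHomogeneous (homogeneousSubmodule (Fin (n+1)) k))
    (K : ℕ) (hK : 0 < K) :
    ∃ d₀ : ℕ, ∀ d : Fin K → ℕ, (∀ i, d₀ ≤ d i) →
      ∀ f ∈ I ^ K, f.IsHomogeneous (∑ i, d i) →
        f ∈ Submodule.span k {g : MvPolynomial (Fin (n+1)) k |
          ∃ h : Fin K → MvPolynomial (Fin (n+1)) k,
            (∀ i, h i ∈ I ∧ (h i).IsHomogeneous (d i)) ∧ g = ∏ i, h i} :=
  power_multiplication_surjective_in_large_degrees_general k n I hI K
end

section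
/- Let T = k[α_1, α_2] be a polynomial ring in two variables over a field k, and let J ⊆ I be monomial ideals of T such that T/J is a finite-dimensional k-vector space. Then the natural map T → Hom_T(J, I) sending f to the multiplication map g ↦ f·g is an isomorphism of T-modules; in particular, every T-module homomorphism φ: J → I is multiplication by a unique polynomial f ∈ T. -/
/-!
Since `T/J` is finite-dimensional, each variable satisfies a monic relation modulo `J`; as `J`
is monomial, it contains every monomial of that relation, so `J` contains pure powers `a = α₁ⁿ`
and `b = α₂ᵐ`, which are relatively prime. For `φ : J → T` linear, `a φ(b) = φ(ab) = b φ(a)`,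
so `a ∣ φ(a)`, say `φ(a) = a f`, and then `a φ(g) = g φ(a) = a f g` gives `φ(g) = f g` for
every `g ∈ J`.
-/

open MvPolynomial

/-- A monomial ideal: an ideal generated by monomials. -/
def IsMonomialIdeal {k : Type*} [Field k] (I : Ideal (MvPolynomial (Fin 2) k)) : Prop :=
  ∃ A : Set (Fin 2 →₀ ℕ), I = Ideal.span ((fun c => monomial c (1 : k)) '' A)

/-- The natural map `T → Hom_T(J, I)` sending `f` to the multiplication map `g ↦ f·g`. -/
noncomputable def mulMap {k : Type*} [Field k]
    (J I : Ideal (MvPolynomial (Fin 2) k)) (h : J ≤ I) (f : MvPolynomial (Fin 2) k) :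
    (↥J) →ₗ[MvPolynomial (Fin 2) k] (↥I) where
  toFun g := ⟨f * g, I.mul_mem_left f (h g.2)⟩
  map_add' x y := Subtype.ext (by simp [mul_add])
  map_smul' c x := Subtype.ext (by simp [smul_eq_mul]; ring)

theorem Ideal.smul_linearMap_apply_comm {R M : Type*} [CommRing R] [AddCommGroup M] [Module R M]
    {J : Ideal R} (φ : J →ₗ[R] M) (g h : J) : (g : R) • φ h = (h : R) • φ g := by
  rw [← map_smul, ← map_smul]
  congr 1
  exact Subtype.ext (mul_comm _ _)

theorem Ideal.exists_linearMap_eq_mul_of_isRelPrime {R : Type*} [CommRing R] [IsDomain R]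
    [DecompositionMonoid R] {J : Ideal R} {a b : R} (ha : a ∈ J) (hb : b ∈ J) (ha0 : a ≠ 0)
    (hab : IsRelPrime a b) (φ : J →ₗ[R] R) : ∃ f : R, ∀ g : J, φ g = f * g := by
  have comm := Ideal.smul_linearMap_apply_comm φ
  obtain ⟨f, hf⟩ : a ∣ φ ⟨a, ha⟩ :=
    hab.dvd_of_dvd_mul_left ⟨φ ⟨b, hb⟩, comm ⟨b, hb⟩ ⟨a, ha⟩⟩
  refine ⟨f, fun g => mul_left_cancel₀ ha0 ?_⟩
  calc a * φ g = g * φ ⟨a, ha⟩ := comm ⟨a, ha⟩ g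
    _ = a * (f * g) := by rw [hf]; ring

theorem MvPolynomial.isRelPrime_X_X {σ R : Type*} [CommRing R] [IsDomain R] {i j : σ}
    (hij : i ≠ j) : IsRelPrime (X i : MvPolynomial σ R) (X j) :=
  X_prime.irreducible.isRelPrime_iff_not_dvd.mpr (X_dvd_X.not.mpr hij)

theorem MvPolynomial.coeff_single_aeval_X {σ R : Type*} [CommSemiring R] (i : σ)
    (p : Polynomial R) (n : ℕ) :
    coeff (Finsupp.single i n) (Polynomial.aeval (X i : MvPolynomial σ R) p) = p.coeff n := by
  induction p using Polynomial.induction_on' with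
  | add p q hp hq => simp only [map_add, coeff_add, Polynomial.coeff_add, hp, hq]
  | monomial m r =>
    classical
    rw [Polynomial.aeval_monomial, algebraMap_eq, X_pow_eq_monomial, C_mul_monomial, mul_one,
      coeff_monomial, Polynomial.coeff_monomial]
    simp only [(Finsupp.single_injective i).eq_iff]

section MonomialIdeal

variable {k : Type*} [Field k] {J : Ideal (MvPolynomial (Fin 2) k)}

theorem IsMonomialIdeal.monomial_mem_of_mem_support (hJ : IsMonomialIdeal J)
    {x : MvPolynomial (Fin 2) k} (hx : x ∈ J) {d : Fin 2 →₀ ℕ} (hd : d ∈ x.support) :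
    monomial d (1 : k) ∈ J := by
  obtain ⟨A, rfl⟩ := hJ
  rw [mem_ideal_span_monomial_image] at hx ⊢
  intro e he
  exact Finset.mem_singleton.mp (support_monomial_subset he) ▸ hx d hd

theorem IsMonomialIdeal.exists_X_pow_mem (hJ : IsMonomialIdeal J)
    [FiniteDimensional k (MvPolynomial (Fin 2) k ⧸ J)] (i : Fin 2) :
    ∃ n : ℕ, (X i : MvPolynomial (Fin 2) k) ^ n ∈ J := by
  obtain ⟨p, hmonic, hp⟩ := Algebra.IsIntegral.isIntegral (R := k) (Ideal.Quotient.mk J (X i))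
  have hmem : Polynomial.aeval (X i) p ∈ J := by
    rw [← Ideal.Quotient.eq_zero_iff_mem, ← Ideal.Quotient.mkₐ_eq_mk k,
      ← Polynomial.aeval_algHom_apply]
    exact hp
  refine ⟨p.natDegree, X_pow_eq_monomial (R := k) ▸ hJ.monomial_mem_of_mem_support hmem ?_⟩
  rw [mem_support_iff, coeff_single_aeval_X, hmonic.coeff_natDegree]
  exact one_ne_zero

end MonomialIdeal

section MulMap

variable {k : Type*} [Field k] {J I : Ideal (MvPolynomial (Fin 2) k)} (h : J ≤ I)

theorem isLinearMap_mulMap : IsLinearMap (MvPolynomial (Fin 2) k) (mulMap J I h) :=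
  ⟨fun f f' => LinearMap.ext fun g => Subtype.ext (add_mul f f' g),
    fun c f => LinearMap.ext fun g => Subtype.ext (mul_assoc c f g)⟩

theorem mulMap_injective (hJ : J ≠ ⊥) : Function.Injective (mulMap J I h) := by
  obtain ⟨a, ha, ha0⟩ := Submodule.exists_mem_ne_zero_of_ne_bot hJ
  intro f f' hff'
  exact mul_right_cancel₀ ha0 (congrArg Subtype.val (LinearMap.congr_fun hff' ⟨a, ha⟩))

theorem mulMap_surjective_of_isRelPrime {a b : MvPolynomial (Fin 2) k} (ha : a ∈ J) (hb : b ∈ J)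
    (ha0 : a ≠ 0) (hab : IsRelPrime a b) : Function.Surjective (mulMap J I h) := by
  intro φ
  obtain ⟨f, hf⟩ := J.exists_linearMap_eq_mul_of_isRelPrime ha hb ha0 hab (I.subtype ∘ₗ φ)
  exact ⟨f, LinearMap.ext fun g => Subtype.ext (hf g).symm⟩

end MulMap

theorem mulMap_linear_bijective_general (k : Type*) [Field k]
    (J I : Ideal (MvPolynomial (Fin 2) k)) (hJI : J ≤ I)
    (hJm : IsMonomialIdeal J)
    (hfin : FiniteDimensional k (MvPolynomial (Fin 2) k ⧸ J)) :
    IsLinearMap (MvPolynomial (Fin 2) k) (mulMap J I hJI) ∧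
      Function.Bijective (mulMap J I hJI) ∧
      ∀ φ : (↥J) →ₗ[MvPolynomial (Fin 2) k] (↥I),
        ∃! f : MvPolynomial (Fin 2) k, ∀ g : ↥J, (φ g : MvPolynomial (Fin 2) k) = f * g := by
  obtain ⟨n, hn⟩ := hJm.exists_X_pow_mem 0
  obtain ⟨m, hm⟩ := hJm.exists_X_pow_mem 1
  have hX0 : (X 0 : MvPolynomial (Fin 2) k) ^ n ≠ 0 := pow_ne_zero n (X_ne_zero 0)
  have hbij : Function.Bijective (mulMap J I hJI) :=
    ⟨mulMap_injective hJI ((Submodule.ne_bot_iff J).mpr ⟨_, hn, hX0⟩),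
      mulMap_surjective_of_isRelPrime hJI hn hm hX0 (isRelPrime_X_X zero_ne_one).pow⟩
  refine ⟨isLinearMap_mulMap hJI, hbij, fun φ => ?_⟩
  obtain ⟨f, rfl⟩ := hbij.2 φ
  exact ⟨f, fun g => rfl,
    fun f' hf' => hbij.1 (LinearMap.ext fun g => Subtype.ext (hf' g).symm)⟩

theorem mulMap_linear_bijective (k : Type*) [Field k] [IsAlgClosed k]
    (J I : Ideal (MvPolynomial (Fin 2) k)) (hJI : J ≤ I)
    (hJm : IsMonomialIdeal J) (hIm : IsMonomialIdeal I)
    (hfin : FiniteDimensional k (MvPolynomial (Fin 2) k ⧸ J)) :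
    IsLinearMap (MvPolynomial (Fin 2) k) (mulMap J I hJI) ∧
      Function.Bijective (mulMap J I hJI) ∧
      ∀ φ : (↥J) →ₗ[MvPolynomial (Fin 2) k] (↥I),
        ∃! f : MvPolynomial (Fin 2) k, ∀ g : ↥J, (φ g : MvPolynomial (Fin 2) k) = f * g :=
  mulMap_linear_bijective_general k J I hJI hJm hfin
end

section
/- Let T = k[α_1, α_2] and let J = (α_1^{a_0}, α_1^{a_1}α_2^{b_1}, …, α_1^{a_{m−1}}α_2^{b_{m−1}}, α_2^{b_m}) be a monomial ideal with T/J finite-dimensional over k, where a_0 > a_1 > ⋯ > a_{m−1} > a_m = 0 and 0 = b_0 < b_1 < ⋯ < b_m. Then for every positive integer c, the k-linear map ψ: ⊕_{i=0}^{m} T_{a_i+b_i+c} → ⊕_{i=1}^{m} T_{a_{i−1}+b_i+c} defined by ψ(f_0, …, f_m) = (α_2^{b_i−b_{i−1}}·f_{i−1} − α_1^{a_{i−1}−a_i}·f_i)_{i=1,…,m} is surjective. -/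
/-!
Every monomial of degree `a_{i-1} + b_i + c` in two variables is divisible by `α₂^{b_i}` or by
`α₁^{a_{i-1}}`, so each `g_i` splits as `α₂^{b_i} P_i + α₁^{a_{i-1}} Q_i`, and by linearity of `ψ`
it suffices to hit `α₂^{b_i} e_i` and `α₁^{a_{i-1}} e_i`. The sequences
`f_j = α₁^{a_j - A} α₂^{b_j - B}` are syzygies of the generators: `(ψ f)_l = 0` whenever
`A ≤ a_l` and `B ≤ b_{l-1}`. Truncating `α₁^{a_j - a_{i-1}} α₂^{b_j}` to `j < i`, resp.
`α₁^{a_j} α₂^{b_j - b_i}` to `j ≥ i`, leaves a single nonzero entry of `ψ f`, at position `i`.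
-/

open MvPolynomial

theorem Finsupp.degree_tsub_single {σ : Type*} {s : σ →₀ ℕ} {i : σ} {B : ℕ} (h : B ≤ s i) :
    (s - Finsupp.single i B).degree = s.degree - B := by
  conv_rhs => rw [← tsub_add_cancel_of_le (Finsupp.single_le_iff.mpr h)]
  rw [map_add, Finsupp.degree_single, Nat.add_sub_cancel]

namespace MvPolynomial

variable {σ R : Type*} [CommSemiring R]

theorem monomial_eq_X_pow_mul_monomial {s : σ →₀ ℕ} {i : σ} {B : ℕ} (h : B ≤ s i) (r : R) :
    monomial s r = X i ^ B * monomial (s - Finsupp.single i B) r := by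
  rw [X_pow_eq_monomial, monomial_mul, one_mul,
    add_tsub_cancel_of_le (Finsupp.single_le_iff.mpr h)]

theorem monomial_mem_map_mulLeft_X_pow {s : σ →₀ ℕ} {i : σ} {B : ℕ} (h : B ≤ s i) (r : R) :
    monomial s r ∈
      (homogeneousSubmodule σ R (s.degree - B)).map (LinearMap.mulLeft R (X i ^ B)) :=
  ⟨monomial (s - Finsupp.single i B) r,
    isHomogeneous_monomial r (Finsupp.degree_tsub_single h),
    (monomial_eq_X_pow_mul_monomial h r).symm⟩

theorem homogeneousSubmodule_le_map_mulLeft_sup {A B d : ℕ} (hd : A + B ≤ d) :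
    homogeneousSubmodule (Fin 2) R d ≤
      (homogeneousSubmodule (Fin 2) R (d - B)).map (LinearMap.mulLeft R (X 1 ^ B)) ⊔
        (homogeneousSubmodule (Fin 2) R (d - A)).map (LinearMap.mulLeft R (X 0 ^ A)) := by
  intro g hg
  rw [← g.support_sum_monomial_coeff]
  refine Submodule.sum_mem _ fun s hs => ?_
  have hs : s.degree = d := by
    rw [Finsupp.degree_eq_weight_one]
    exact hg (mem_support_iff.mp hs)
  have hsum : s 0 + s 1 = d := by rw [← hs, Finsupp.degree_eq_sum, Fin.sum_univ_two]
  by_cases h : B ≤ s 1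
  · exact Submodule.mem_sup_left (hs ▸ monomial_mem_map_mulLeft_X_pow h _)
  · exact Submodule.mem_sup_right (hs ▸ monomial_mem_map_mulLeft_X_pow (by omega) _)

theorem IsHomogeneous.exists_eq_X_pow_mul_add_X_pow_mul {g : MvPolynomial (Fin 2) R} {A B c : ℕ}
    (hg : g.IsHomogeneous (A + B + c)) :
    ∃ P Q : MvPolynomial (Fin 2) R, P.IsHomogeneous (A + c) ∧ Q.IsHomogeneous (B + c) ∧
      g = X 1 ^ B * P + X 0 ^ A * Q := by
  have hmem := homogeneousSubmodule_le_map_mulLeft_sup (le_add_right le_rfl) hg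
  rw [show A + B + c - B = A + c by omega, show A + B + c - A = B + c by omega] at hmem
  obtain ⟨_, ⟨P, hP, rfl⟩, _, ⟨Q, hQ, rfl⟩, hPQ⟩ := Submodule.mem_sup.mp hmem
  exact ⟨P, Q, hP, hQ, hPQ.symm⟩

end MvPolynomial

noncomputable section Psi

variable (R : Type*) [CommRing R] (a b : ℕ → ℕ)

def psi :
    (ℕ → MvPolynomial (Fin 2) R) →ₗ[MvPolynomial (Fin 2) R] (ℕ → MvPolynomial (Fin 2) R) where
  toFun f i := X 1 ^ (b i - b (i - 1)) * f (i - 1) - X 0 ^ (a (i - 1) - a i) * f i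
  map_add' f g := by funext i; simp only [Pi.add_apply]; ring
  map_smul' r f := by funext i; simp only [Pi.smul_apply, smul_eq_mul, RingHom.id_apply]; ring

@[simp]
theorem psi_apply (f : ℕ → MvPolynomial (Fin 2) R) (i : ℕ) :
    psi R a b f i = X 1 ^ (b i - b (i - 1)) * f (i - 1) - X 0 ^ (a (i - 1) - a i) * f i :=
  rfl

def psiPreimageX1Pow (i j : ℕ) : MvPolynomial (Fin 2) R :=
  if j < i then X 0 ^ (a j - a (i - 1)) * X 1 ^ b j else 0

def psiPreimageX0Pow (i j : ℕ) : MvPolynomial (Fin 2) R :=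
  if i ≤ j then X 0 ^ a j * X 1 ^ (b j - b i) else 0

variable {R a b} {m : ℕ} (ha : AntitoneOn a (Set.Iic m)) (hb : MonotoneOn b (Set.Iic m))
include ha hb

theorem psi_X_pow_tsub_mul_X_pow_tsub {A B l : ℕ} (hl : 1 ≤ l) (hlm : l ≤ m) (hA : A ≤ a l)
    (hB : B ≤ b (l - 1)) :
    psi R a b (fun j => X 0 ^ (a j - A) * X 1 ^ (b j - B)) l = 0 := by
  have hal : a l ≤ a (l - 1) :=
    ha (Set.mem_Iic.mpr (by omega)) (Set.mem_Iic.mpr (by omega)) (by omega)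
  have hbl : b (l - 1) ≤ b l :=
    hb (Set.mem_Iic.mpr (by omega)) (Set.mem_Iic.mpr (by omega)) (by omega)
  have h0 : X 0 ^ (a (l - 1) - a l) * X 0 ^ (a l - A) =
      (X 0 ^ (a (l - 1) - A) : MvPolynomial (Fin 2) R) := by
    rw [← pow_add, tsub_add_tsub_cancel hal hA]
  have h1 : X 1 ^ (b l - b (l - 1)) * X 1 ^ (b (l - 1) - B) =
      (X 1 ^ (b l - B) : MvPolynomial (Fin 2) R) := by
    rw [← pow_add, tsub_add_tsub_cancel hbl hB]
  rw [psi_apply]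
  linear_combination X 0 ^ (a (l - 1) - A) * h1 - X 1 ^ (b l - B) * h0

theorem psi_psiPreimageX1Pow {i l : ℕ} (hi : i ≤ m) (hl : 1 ≤ l) (hlm : l ≤ m) :
    psi R a b (psiPreimageX1Pow R a b i) l = if l = i then X 1 ^ b i else 0 := by
  rcases lt_trichotomy l i with h | rfl | h
  · have hai : a (i - 1) ≤ a l :=
      ha (Set.mem_Iic.mpr (by omega)) (Set.mem_Iic.mpr (by omega)) (by omega)
    simpa [psiPreimageX1Pow, h, show l - 1 < i by omega, h.ne] using
      psi_X_pow_tsub_mul_X_pow_tsub (R := R) ha hb hl hlm hai (Nat.zero_le _)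
  · have hbl : b (l - 1) ≤ b l :=
      hb (Set.mem_Iic.mpr (by omega)) (Set.mem_Iic.mpr (by omega)) (by omega)
    simp [psiPreimageX1Pow, show l - 1 < l by omega, pow_sub_mul_pow _ hbl]
  · simp [psiPreimageX1Pow, show ¬ l - 1 < i by omega, h.not_gt, h.ne']

theorem psi_psiPreimageX0Pow {i l : ℕ} (hl : 1 ≤ l) (hlm : l ≤ m) :
    psi R a b (psiPreimageX0Pow R a b i) l = if l = i then -X 0 ^ a (i - 1) else 0 := by
  rcases lt_trichotomy l i with h | rfl | h
  · simp [psiPreimageX0Pow, show ¬ i ≤ l - 1 by omega, h.not_ge, h.ne]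
  · have hal : a l ≤ a (l - 1) :=
      ha (Set.mem_Iic.mpr (by omega)) (Set.mem_Iic.mpr (by omega)) (by omega)
    simp [psiPreimageX0Pow, show ¬ l ≤ l - 1 by omega, pow_sub_mul_pow _ hal]
  · have hbi : b i ≤ b (l - 1) :=
      hb (Set.mem_Iic.mpr (by omega)) (Set.mem_Iic.mpr (by omega)) (by omega)
    simpa [psiPreimageX0Pow, h.le, show i ≤ l - 1 by omega, h.ne'] using
      psi_X_pow_tsub_mul_X_pow_tsub (R := R) ha hb hl hlm (Nat.zero_le _) hbi

omit hb in
theorem MvPolynomial.IsHomogeneous.mul_psiPreimageX1Pow {P : MvPolynomial (Fin 2) R} {i c : ℕ}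
    (hP : P.IsHomogeneous (a (i - 1) + c)) (hi : i ≤ m) (j : ℕ) :
    (P * psiPreimageX1Pow R a b i j).IsHomogeneous (a j + b j + c) := by
  unfold psiPreimageX1Pow
  split_ifs with h
  · have hai : a (i - 1) ≤ a j :=
      ha (Set.mem_Iic.mpr (by omega)) (Set.mem_Iic.mpr (by omega)) (by omega)
    convert hP.mul ((isHomogeneous_X_pow 0 (a j - a (i - 1))).mul (isHomogeneous_X_pow 1 (b j)))
      using 1
    omega
  · simpa using isHomogeneous_zero _ _ _

omit ha in
theorem MvPolynomial.IsHomogeneous.mul_psiPreimageX0Pow {Q : MvPolynomial (Fin 2) R} {i c j : ℕ}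
    (hQ : Q.IsHomogeneous (b i + c)) (hj : j ≤ m) :
    (Q * psiPreimageX0Pow R a b i j).IsHomogeneous (a j + b j + c) := by
  unfold psiPreimageX0Pow
  split_ifs with h
  · have hbi : b i ≤ b j := hb (Set.mem_Iic.mpr (by omega)) (Set.mem_Iic.mpr (by omega)) h
    convert hQ.mul ((isHomogeneous_X_pow 0 (a j)).mul (isHomogeneous_X_pow 1 (b j - b i)))
      using 1
    omega
  · simpa using isHomogeneous_zero _ _ _

theorem exists_isHomogeneous_psi_eq (c : ℕ) (g : ℕ → MvPolynomial (Fin 2) R)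
    (hg : ∀ i, 1 ≤ i → i ≤ m → (g i).IsHomogeneous (a (i - 1) + b i + c)) :
    ∃ f : ℕ → MvPolynomial (Fin 2) R, (∀ i ≤ m, (f i).IsHomogeneous (a i + b i + c)) ∧
      ∀ i, 1 ≤ i → i ≤ m → g i = psi R a b f i := by
  have hsplit : ∀ i ∈ Finset.Icc 1 m, ∃ P Q : MvPolynomial (Fin 2) R,
      P.IsHomogeneous (a (i - 1) + c) ∧ Q.IsHomogeneous (b i + c) ∧
        g i = X 1 ^ b i * P + X 0 ^ a (i - 1) * Q := by
    intro i hi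
    obtain ⟨hi1, him⟩ := Finset.mem_Icc.mp hi
    exact (hg i hi1 him).exists_eq_X_pow_mul_add_X_pow_mul
  choose! P Q hP hQ hPQ using hsplit
  refine ⟨∑ i ∈ Finset.Icc 1 m,
      (P i • psiPreimageX1Pow R a b i - Q i • psiPreimageX0Pow R a b i),
    fun j hj => ?_, fun l hl hlm => ?_⟩
  · simp only [Finset.sum_apply, Pi.sub_apply, Pi.smul_apply, smul_eq_mul]
    refine IsHomogeneous.sum _ _ _ fun i hi => ?_
    obtain ⟨hi1, him⟩ := Finset.mem_Icc.mp hi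
    exact ((hP i hi).mul_psiPreimageX1Pow ha him j).sub ((hQ i hi).mul_psiPreimageX0Pow hb hj)
  · have hl' : l ∈ Finset.Icc 1 m := Finset.mem_Icc.mpr ⟨hl, hlm⟩
    simp only [map_sum, map_sub, map_smul, Finset.sum_apply, Pi.sub_apply, Pi.smul_apply,
      smul_eq_mul]
    rw [Finset.sum_congr rfl fun i hi => by
      rw [psi_psiPreimageX1Pow ha hb (Finset.mem_Icc.mp hi).2 hl hlm,
        psi_psiPreimageX0Pow ha hb hl hlm]]
    simp only [hPQ l hl', mul_ite, mul_zero, mul_neg, Finset.sum_sub_distrib, Finset.sum_ite_eq,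
      hl', if_true, sub_neg_eq_add]
    ring

end Psi

theorem psi_surjective_general (k : Type*) [Field k]
    (m : ℕ) (a b : ℕ → ℕ)
    (ha : ∀ i < m, a (i+1) < a i)
    (hb : ∀ i < m, b i < b (i+1))
    (c : ℕ) :
    ∀ g : ℕ → MvPolynomial (Fin 2) k,
      (∀ i, 1 ≤ i → i ≤ m → (g i).IsHomogeneous (a (i-1) + b i + c)) →
      ∃ f : ℕ → MvPolynomial (Fin 2) k,
        (∀ i ≤ m, (f i).IsHomogeneous (a i + b i + c)) ∧
        ∀ i, 1 ≤ i → i ≤ m →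
          g i = X 1 ^ (b i - b (i-1)) * f (i-1) - X 0 ^ (a (i-1) - a i) * f i :=
  fun g hg => exists_isHomogeneous_psi_eq (strictAntiOn_Iic_of_succ_lt ha).antitoneOn
    (strictMonoOn_Iic_of_lt_succ hb).monotoneOn c g hg

/-- Here `T = k[α₁, α₂]` with `α₁ = X 0` and `α₂ = X 1`. The map `ψ`, obtained by applying
`Hom_T(-, T)` in degree `c` to the canonical minimal free resolution of `T/J`, sends
`(f₀, …, f_m)` to `(α₂^(bᵢ-b_{i-1})·f_{i-1} - α₁^(a_{i-1}-aᵢ)·fᵢ)_{i=1,…,m}`; it is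
surjective on the relevant spaces of homogeneous polynomials. -/
theorem psi_surjective (k : Type*) [Field k] [IsAlgClosed k]
    (m : ℕ) (hm : 1 ≤ m) (a b : ℕ → ℕ)
    (ha : ∀ i < m, a (i+1) < a i) (ham : a m = 0)
    (hb0 : b 0 = 0) (hb : ∀ i < m, b i < b (i+1))
    (J : Ideal (MvPolynomial (Fin 2) k))
    (hJ : J = Ideal.span ((fun i => X 0 ^ a i * X 1 ^ b i) '' Set.Iic m))
    (hfin : FiniteDimensional k (MvPolynomial (Fin 2) k ⧸ J))
    (c : ℕ) (hc : 0 < c) :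
    ∀ g : ℕ → MvPolynomial (Fin 2) k,
      (∀ i, 1 ≤ i → i ≤ m → (g i).IsHomogeneous (a (i-1) + b i + c)) →
      ∃ f : ℕ → MvPolynomial (Fin 2) k,
        (∀ i ≤ m, (f i).IsHomogeneous (a i + b i + c)) ∧
        ∀ i, 1 ≤ i → i ≤ m →
          g i = X 1 ^ (b i - b (i-1)) * f (i-1) - X 0 ^ (a (i-1) - a i) * f i :=
  psi_surjective_general k m a b ha hb c
end

section
/- Let S = k[α_0, α_1, α_2] and fix integers e, d, r with C(e+1, 2) < d < r < C(e+2, 2) and r − d ≤ d − s, where s = C(e+1, 2) = dim_k S_{e−1}. Set A_i = α_1^i α_2^{e−i}, B_i = α_1^i α_2^{e+1−i}, C_i = α_1^i α_2^{e+2−i}. Let J = (A_i for d−s ≤ i ≤ e; B_i for r−d ≤ i ≤ d−s−1; C_i for 0 ≤ i ≤ r−d−1) and I = (A_i for r−s ≤ i ≤ e; A_i·α_2 and A_i·α_0 for d−s ≤ i ≤ r−s−1; B_i for r−d ≤ i ≤ d−s−1; C_i for 0 ≤ i ≤ r−d−1). Then dim_k Hom_S(J/I, S/I)_0 = (r−d)².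 -/
open MvPolynomial

/-- `A_i = α₁^i α₂^(e-i)` where `α₀ = X 0`, `α₁ = X 1`, `α₂ = X 2`. -/
noncomputable def A (k : Type*) [Field k] (e i : ℕ) : MvPolynomial (Fin 3) k :=
  X 1 ^ i * X 2 ^ (e - i)

/-- `B_i = α₁^i α₂^(e+1-i)`. -/
noncomputable def B (k : Type*) [Field k] (e i : ℕ) : MvPolynomial (Fin 3) k :=
  X 1 ^ i * X 2 ^ (e + 1 - i)

/-- `C_i = α₁^i α₂^(e+2-i)`. -/
noncomputable def C (k : Type*) [Field k] (e i : ℕ) : MvPolynomial (Fin 3) k :=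
  X 1 ^ i * X 2 ^ (e + 2 - i)

/-- The ideal `J = (A_i for d-s ≤ i ≤ e; B_i for r-d ≤ i ≤ d-s-1; C_i for 0 ≤ i ≤ r-d-1)`. -/
noncomputable def Jf (k : Type*) [Field k] (e d r s : ℕ) : Ideal (MvPolynomial (Fin 3) k) :=
  Ideal.span (A k e '' Set.Icc (d - s) e ∪ B k e '' Set.Icc (r - d) (d - s - 1) ∪
    C k e '' Set.Iic (r - d - 1))

/-- The ideal `I = (A_i for r-s ≤ i ≤ e; A_i·α₂ and A_i·α₀ for d-s ≤ i ≤ r-s-1;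
B_i for r-d ≤ i ≤ d-s-1; C_i for 0 ≤ i ≤ r-d-1)`. -/
noncomputable def If (k : Type*) [Field k] (e d r s : ℕ) : Ideal (MvPolynomial (Fin 3) k) :=
  Ideal.span (A k e '' Set.Icc (r - s) e ∪
    (fun i => A k e i * X 2) '' Set.Icc (d - s) (r - s - 1) ∪
    (fun i => A k e i * X 0) '' Set.Icc (d - s) (r - s - 1) ∪
    B k e '' Set.Icc (r - d) (d - s - 1) ∪
    C k e '' Set.Iic (r - d - 1))

/-- The degree-`d` graded piece of `S/I`. -/
noncomputable def quotPiece (k : Type*) [Field k]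
    (I : Ideal (MvPolynomial (Fin 3) k)) (d : ℕ) :
    Submodule k (MvPolynomial (Fin 3) k ⧸ I) :=
  (homogeneousSubmodule (Fin 3) k d).map (Ideal.Quotient.mkₐ k I).toLinearMap

/-- The `k`-vector space `Hom_S(J/I, S/I)₀` of degree-preserving `S`-module homomorphisms,
where `J/I` is graded by the images of the homogeneous elements of `J`. -/
noncomputable def HomQuot0 (k : Type*) [Field k]
    (J I : Ideal (MvPolynomial (Fin 3) k)) :
    Submodule k ((↥J ⧸ Submodule.comap (Submodule.subtype J) I)
      →ₗ[MvPolynomial (Fin 3) k] (MvPolynomial (Fin 3) k ⧸ I)) where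
  carrier := {φ | ∀ (d : ℕ) (f : ↥J), (f : MvPolynomial (Fin 3) k).IsHomogeneous d →
    φ (Submodule.Quotient.mk f) ∈ quotPiece k I d}
  add_mem' := fun h1 h2 d f hf => by
    simpa using Submodule.add_mem _ (h1 d f hf) (h2 d f hf)
  zero_mem' := fun d f hf => by simp
  smul_mem' := fun r φ h d f hf => by
    simpa using Submodule.smul_mem _ r (h d f hf)

/-!
All generators of `J` except the `r - d` monomials `A_i`, `d - s ≤ i < r - s`, already lie in
`I`, and each variable times such an `A_i` lies in `I`. Hence `J/I` is the `k`-vector space on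
these `A_i`, concentrated in degree `e` and killed by `(α₀, α₁, α₂)`, so a degree-preserving
homomorphism `J/I → S/I` is the same as an `(r - d)`-tuple of elements of the degree-`e` socle of
`S/I`. That socle has the classes of the same `A_i` as a basis: if `α₀ p ∈ I` for `p` of degree
`e`, every monomial of `p` is either in `I` or one of these `A_i`. As `I` and `J` are monomial
ideals, all membership questions reduce to comparing exponent vectors.
-/

namespace MvPolynomial

theorem mem_idealOfVars_of_constantCoeff_eq_zero {σ R : Type*} [CommSemiring R]
    {p : MvPolynomial σ R} (hp : constantCoeff p = 0) : p ∈ idealOfVars σ R := by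
  rw [← pow_one (idealOfVars σ R), mem_pow_idealOfVars_iff']
  intro m hm
  rw [Nat.lt_one_iff, Finsupp.degree_eq_zero_iff] at hm
  rwa [hm, ← constantCoeff_eq]

theorem smul_eq_constantCoeff_smul {σ R M : Type*} [CommRing R] [AddCommGroup M]
    [Module (MvPolynomial σ R) M] [Module R M] [IsScalarTower R (MvPolynomial σ R) M] {z : M}
    (hz : ∀ i, (X i : MvPolynomial σ R) • z = 0) (p : MvPolynomial σ R) :
    p • z = constantCoeff p • z := by
  have hvars : idealOfVars σ R ≤ (⊥ : Submodule (MvPolynomial σ R) M).colon {z} :=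
    Ideal.span_le.2 <| Set.range_subset_iff.2 fun i => Submodule.mem_colon_singleton.2 (hz i)
  have hker : (p - C (constantCoeff p)) • z = 0 := by
    simpa using hvars (mem_idealOfVars_of_constantCoeff_eq_zero (by simp))
  rw [← algebraMap_smul (MvPolynomial σ R) (constantCoeff p), algebraMap_eq, ← sub_eq_zero,
    ← sub_smul, hker]

end MvPolynomial

noncomputable def tripleExp (a b c : ℕ) : Fin 3 →₀ ℕ :=
  Finsupp.single 0 a + Finsupp.single 1 b + Finsupp.single 2 c

section tripleExp

variable {a b c : ℕ}

@[simp] theorem tripleExp_apply_zero : tripleExp a b c 0 = a := by simp [tripleExp]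
@[simp] theorem tripleExp_apply_one : tripleExp a b c 1 = b := by simp [tripleExp]
@[simp] theorem tripleExp_apply_two : tripleExp a b c 2 = c := by simp [tripleExp]

theorem tripleExp_le_iff {m : Fin 3 →₀ ℕ} :
    tripleExp a b c ≤ m ↔ a ≤ m 0 ∧ b ≤ m 1 ∧ c ≤ m 2 := by
  simp [Finsupp.le_def, Fin.forall_fin_succ]

theorem eq_tripleExp (m : Fin 3 →₀ ℕ) : m = tripleExp (m 0) (m 1) (m 2) := by
  ext j; fin_cases j <;> simp

theorem Finsupp.degree_fin_three (m : Fin 3 →₀ ℕ) : m.degree = m 0 + m 1 + m 2 := by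
  rw [Finsupp.degree_eq_sum, Fin.sum_univ_three]

variable {R : Type*} [CommSemiring R]

theorem monomial_tripleExp :
    monomial (tripleExp a b c) (1 : R) = X 0 ^ a * X 1 ^ b * X 2 ^ c := by
  simp only [tripleExp, monomial_add_single, X_pow_eq_monomial]

theorem monomial_tripleExp_mul_X_zero :
    monomial (tripleExp a b c) (1 : R) * X 0 = monomial (tripleExp (a + 1) b c) 1 := by
  simp only [monomial_tripleExp]; ring

theorem monomial_tripleExp_mul_X_two :
    monomial (tripleExp a b c) (1 : R) * X 2 = monomial (tripleExp a b (c + 1)) 1 := by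
  simp only [monomial_tripleExp]; ring

end tripleExp

noncomputable def genExpIf (e d r s : ℕ) : Set (Fin 3 →₀ ℕ) :=
  (fun i => tripleExp 0 i (e - i)) '' Set.Icc (r - s) e ∪
    (fun i => tripleExp 0 i (e - i + 1)) '' Set.Icc (d - s) (r - s - 1) ∪
    (fun i => tripleExp 1 i (e - i)) '' Set.Icc (d - s) (r - s - 1) ∪
    (fun i => tripleExp 0 i (e + 1 - i)) '' Set.Icc (r - d) (d - s - 1) ∪
    (fun i => tripleExp 0 i (e + 2 - i)) '' Set.Iic (r - d - 1)

noncomputable def genExpJf (e d r s : ℕ) : Set (Fin 3 →₀ ℕ) :=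
  (fun i => tripleExp 0 i (e - i)) '' Set.Icc (d - s) e ∪
    (fun i => tripleExp 0 i (e + 1 - i)) '' Set.Icc (r - d) (d - s - 1) ∪
    (fun i => tripleExp 0 i (e + 2 - i)) '' Set.Iic (r - d - 1)

section genExp

variable {e d r s : ℕ} {g : Fin 3 →₀ ℕ}

theorem mem_genExpIf_iff :
    g ∈ genExpIf e d r s ↔
      (∃ i, (r - s ≤ i ∧ i ≤ e) ∧ tripleExp 0 i (e - i) = g) ∨
      (∃ i, (d - s ≤ i ∧ i ≤ r - s - 1) ∧ tripleExp 0 i (e - i + 1) = g) ∨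
      (∃ i, (d - s ≤ i ∧ i ≤ r - s - 1) ∧ tripleExp 1 i (e - i) = g) ∨
      (∃ i, (r - d ≤ i ∧ i ≤ d - s - 1) ∧ tripleExp 0 i (e + 1 - i) = g) ∨
      (∃ i, i ≤ r - d - 1 ∧ tripleExp 0 i (e + 2 - i) = g) := by
  simp only [genExpIf, Set.mem_union, Set.mem_image, Set.mem_Icc, Set.mem_Iic, or_assoc]

theorem mem_genExpJf_iff :
    g ∈ genExpJf e d r s ↔
      (∃ i, (d - s ≤ i ∧ i ≤ e) ∧ tripleExp 0 i (e - i) = g) ∨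
      (∃ i, (r - d ≤ i ∧ i ≤ d - s - 1) ∧ tripleExp 0 i (e + 1 - i) = g) ∨
      (∃ i, i ≤ r - d - 1 ∧ tripleExp 0 i (e + 2 - i) = g) := by
  simp only [genExpJf, Set.mem_union, Set.mem_image, Set.mem_Icc, Set.mem_Iic, or_assoc]

end genExp

section generators

variable {k : Type*} [Field k] {e d r s i : ℕ}

theorem A_eq_monomial : A k e i = monomial (tripleExp 0 i (e - i)) 1 := by
  rw [monomial_tripleExp, pow_zero, one_mul, A]

theorem B_eq_monomial : B k e i = monomial (tripleExp 0 i (e + 1 - i)) 1 := by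
  rw [monomial_tripleExp, pow_zero, one_mul, B]

theorem C_eq_monomial : C k e i = monomial (tripleExp 0 i (e + 2 - i)) 1 := by
  rw [monomial_tripleExp, pow_zero, one_mul, _root_.C]

theorem isHomogeneous_A (hi : i ≤ e) : (A k e i).IsHomogeneous e := by
  rw [A_eq_monomial]
  exact isHomogeneous_monomial _ (by simp [Finsupp.degree_fin_three]; omega)

theorem A_mem_Jf (hi : d - s ≤ i) (hie : i ≤ e) : A k e i ∈ Jf k e d r s :=
  Ideal.subset_span (Or.inl (Or.inl ⟨i, ⟨hi, hie⟩, rfl⟩))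

theorem If_eq_span_monomial :
    If k e d r s = Ideal.span ((monomial · 1) '' genExpIf e d r s) := by
  simp only [If, genExpIf, Set.image_union, Set.image_image, A_eq_monomial,
    monomial_tripleExp_mul_X_two, monomial_tripleExp_mul_X_zero, zero_add, B_eq_monomial,
    C_eq_monomial]

theorem Jf_eq_span_monomial :
    Jf k e d r s = Ideal.span ((monomial · 1) '' genExpJf e d r s) := by
  simp only [Jf, genExpJf, Set.image_union, Set.image_image, A_eq_monomial, B_eq_monomial,
    C_eq_monomial]

theorem mem_If_iff {p : MvPolynomial (Fin 3) k} :
    p ∈ If k e d r s ↔ ∀ m ∈ p.support, ∃ g ∈ genExpIf e d r s, g ≤ m := by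
  rw [If_eq_span_monomial, mem_ideal_span_monomial_image]

theorem mem_Jf_iff {p : MvPolynomial (Fin 3) k} :
    p ∈ Jf k e d r s ↔ ∀ m ∈ p.support, ∃ g ∈ genExpJf e d r s, g ≤ m := by
  rw [Jf_eq_span_monomial, mem_ideal_span_monomial_image]

theorem monomial_mem_If_iff {m : Fin 3 →₀ ℕ} :
    monomial m (1 : k) ∈ If k e d r s ↔ ∃ g ∈ genExpIf e d r s, g ≤ m := by
  classical
  simp [mem_If_iff, support_monomial]

end generators

/-- For `j < r - d`, `A_{d-s+j}` runs over the generators of `J` that are not in `I`. -/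
noncomputable def extraExp (e d s j : ℕ) : Fin 3 →₀ ℕ :=
  tripleExp 0 (d - s + j) (e - (d - s + j))

noncomputable def extraPart {k : Type*} [Field k] (e d r s : ℕ) (p : MvPolynomial (Fin 3) k) :
    MvPolynomial (Fin 3) k :=
  ∑ j : Fin (r - d), monomial (extraExp e d s j) (coeff (extraExp e d s j) p)

section extra

variable {k : Type*} [Field k] {e d r s j : ℕ}

theorem A_eq_monomial_extraExp : A k e (d - s + j) = monomial (extraExp e d s j) 1 :=
  A_eq_monomial

theorem extraExp_injective : Function.Injective (extraExp e d s) := fun i j h => by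
  simpa [extraExp] using congrArg (· 1) h

theorem coeff_extraExp_sum_monomial {n : ℕ} (c : Fin n → k) (i : Fin n) :
    coeff (extraExp e d s i) (∑ j : Fin n, monomial (extraExp e d s j) (c j)) = c i := by
  classical
  rw [coeff_sum, Finset.sum_eq_single i (fun j _ hj => ?_) (by simp), coeff_monomial, if_pos rfl]
  rw [coeff_monomial, if_neg (extraExp_injective.ne (Fin.val_injective.ne hj))]

theorem coeff_sum_monomial_extraExp_of_ne {n : ℕ} (c : Fin n → k) {m : Fin 3 →₀ ℕ}
    (hm : ∀ j : Fin n, extraExp e d s j ≠ m) :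
    coeff m (∑ j : Fin n, monomial (extraExp e d s j) (c j)) = 0 := by
  classical
  simp [coeff_sum, coeff_monomial, hm]

theorem not_genExpIf_le_extraExp (hs : s < d) (he : r ≤ s + e) (hj : j < r - d)
    {g : Fin 3 →₀ ℕ} (hg : g ∈ genExpIf e d r s) : ¬ g ≤ extraExp e d s j := by
  rcases mem_genExpIf_iff.1 hg with ⟨i, hi, rfl⟩ | ⟨i, hi, rfl⟩ | ⟨i, hi, rfl⟩ | ⟨i, hi, rfl⟩ |
      ⟨i, hi, rfl⟩ <;>
    simp only [extraExp, tripleExp_le_iff, tripleExp_apply_zero, tripleExp_apply_one,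
      tripleExp_apply_two] <;> omega

theorem coeff_extraExp_eq_zero_of_mem_If (hs : s < d) (he : r ≤ s + e) (hj : j < r - d)
    {p : MvPolynomial (Fin 3) k} (hp : p ∈ If k e d r s) : coeff (extraExp e d s j) p = 0 := by
  by_contra h
  obtain ⟨g, hg, hle⟩ := mem_If_iff.1 hp _ (mem_support_iff.2 h)
  exact not_genExpIf_le_extraExp hs he hj hg hle

/-- A proper multiple of `A_i`, `d - s ≤ i < r - s`, is divisible by `A_i α₀`, by `A_i α₂`, or
by `A_{i+1} α₂` (by `A_{r-s}` when `i + 1 = r - s`). -/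
theorem exists_genExpIf_le_of_extraExp_lt (hs : s < d) (he : r ≤ s + e) (hj : j < r - d)
    {m : Fin 3 →₀ ℕ} (hlt : extraExp e d s j < m) : ∃ g ∈ genExpIf e d r s, g ≤ m := by
  obtain ⟨hle, hne⟩ := lt_iff_le_and_ne.1 hlt
  simp only [extraExp, tripleExp_le_iff] at hle hne
  have hgrow : 1 ≤ m 0 ∨ d - s + j < m 1 ∨ e - (d - s + j) < m 2 := by
    by_contra! h
    exact hne (by rw [eq_tripleExp m]; congr 1 <;> omega)
  simp only [mem_genExpIf_iff]
  rcases hgrow with h0 | h1 | h2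
  · exact ⟨_, Or.inr (Or.inr (Or.inl ⟨d - s + j, ⟨by omega, by omega⟩, rfl⟩)),
      tripleExp_le_iff.2 ⟨by omega, by omega, by omega⟩⟩
  · by_cases hnext : d - s + j + 1 ≤ r - s - 1
    · exact ⟨_, Or.inr (Or.inl ⟨d - s + j + 1, ⟨by omega, hnext⟩, rfl⟩),
        tripleExp_le_iff.2 ⟨by omega, by omega, by omega⟩⟩
    · exact ⟨_, Or.inl ⟨r - s, ⟨le_rfl, by omega⟩, rfl⟩,
        tripleExp_le_iff.2 ⟨by omega, by omega, by omega⟩⟩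
  · exact ⟨_, Or.inr (Or.inl ⟨d - s + j, ⟨by omega, by omega⟩, rfl⟩),
      tripleExp_le_iff.2 ⟨by omega, by omega, by omega⟩⟩

theorem X_mul_monomial_extraExp_mem_If (hs : s < d) (he : r ≤ s + e) (hj : j < r - d)
    (i : Fin 3) (c : k) : X i * monomial (extraExp e d s j) c ∈ If k e d r s := by
  rw [← mul_one c, ← C_mul_monomial, mul_left_comm, ← pow_one (X i), ← monomial_single_add]
  refine Ideal.mul_mem_left _ _ (monomial_mem_If_iff.2 ?_)
  exact exists_genExpIf_le_of_extraExp_lt hs he hj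
    (lt_add_of_pos_left _ (by simp [pos_iff_ne_zero]))

theorem sub_extraPart_mem_If {p : MvPolynomial (Fin 3) k}
    (hp : ∀ m ∈ p.support, (∀ j : Fin (r - d), extraExp e d s j ≠ m) →
      ∃ g ∈ genExpIf e d r s, g ≤ m) :
    p - extraPart e d r s p ∈ If k e d r s := by
  refine mem_If_iff.2 fun m hm => ?_
  rw [mem_support_iff, coeff_sub, extraPart] at hm
  by_cases hextra : ∃ j : Fin (r - d), extraExp e d s j = m
  · obtain ⟨j, rfl⟩ := hextra
    rw [coeff_extraExp_sum_monomial, sub_self] at hm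
    exact absurd rfl hm
  · push Not at hextra
    rw [coeff_sum_monomial_extraExp_of_ne _ hextra, sub_zero] at hm
    exact hp m (mem_support_iff.2 hm) hextra

theorem sub_extraPart_mem_If_of_mem_Jf (hs : s < d) (he : r ≤ s + e)
    {f : MvPolynomial (Fin 3) k} (hf : f ∈ Jf k e d r s) :
    f - extraPart e d r s f ∈ If k e d r s := by
  refine sub_extraPart_mem_If fun m hm hextra => ?_
  obtain ⟨g, hg, hle⟩ := mem_Jf_iff.1 hf m hm
  rcases mem_genExpJf_iff.1 hg with ⟨i, hi, rfl⟩ | ⟨i, hi, rfl⟩ | ⟨i, hi, rfl⟩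
  · by_cases hir : i < r - s
    · have hA : extraExp e d s (i - (d - s)) = tripleExp 0 i (e - i) := by
        rw [extraExp, Nat.add_sub_cancel' hi.1]
      refine exists_genExpIf_le_of_extraExp_lt hs he (by omega)
        (hA ▸ lt_of_le_of_ne hle fun h => hextra ⟨i - (d - s), by omega⟩ (hA.trans h))
    · exact ⟨_, mem_genExpIf_iff.2 (Or.inl ⟨i, ⟨by omega, hi.2⟩, rfl⟩), hle⟩
  · exact ⟨_, mem_genExpIf_iff.2 (Or.inr (Or.inr (Or.inr (Or.inl ⟨i, hi, rfl⟩)))), hle⟩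
  · exact ⟨_, mem_genExpIf_iff.2 (Or.inr (Or.inr (Or.inr (Or.inr ⟨i, hi, rfl⟩)))), hle⟩

/-- The exponent `m + (1, 0, 0)` is divisible by a generator of `I`; counting degrees, that
generator is `A_i` (which then divides `m`) or `A_i α₀` (and then `m` is an extra exponent). -/
theorem sub_extraPart_mem_If_of_X_zero_mul_mem (hs : s < d) {p : MvPolynomial (Fin 3) k}
    (hp : p.IsHomogeneous e) (h0 : X 0 * p ∈ If k e d r s) :
    p - extraPart e d r s p ∈ If k e d r s := by
  refine sub_extraPart_mem_If fun m hm hextra => ?_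
  have hdeg : m 0 + m 1 + m 2 = e := by
    by_contra h
    exact mem_support_iff.1 hm (hp.coeff_eq_zero (by rwa [Finsupp.degree_fin_three]))
  obtain ⟨g, hg, hle⟩ := mem_If_iff.1 h0 (Finsupp.single 0 1 + m)
    (by rw [support_X_mul]; exact Finset.mem_map_of_mem _ hm)
  have hcoord : g 0 ≤ m 0 + 1 ∧ g 1 ≤ m 1 ∧ g 2 ≤ m 2 := by
    simpa [add_comm] using And.intro (hle 0) (And.intro (hle 1) (hle 2))
  rcases mem_genExpIf_iff.1 hg with ⟨i, hi, rfl⟩ | ⟨i, hi, rfl⟩ | ⟨i, hi, rfl⟩ | ⟨i, hi, rfl⟩ |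
      ⟨i, hi, rfl⟩ <;>
    simp only [tripleExp_apply_zero, tripleExp_apply_one, tripleExp_apply_two] at hcoord
  · exact ⟨_, hg, tripleExp_le_iff.2 ⟨by omega, by omega, by omega⟩⟩
  · omega
  · refine absurd ?_ (hextra ⟨i - (d - s), by omega⟩)
    show extraExp e d s (i - (d - s)) = m
    rw [eq_tripleExp m, extraExp]
    congr 1 <;> omega
  · omega
  · omega

theorem X_mul_mem_If_of_mem_Jf (hs : s < d) (he : r ≤ s + e) {f : MvPolynomial (Fin 3) k}
    (hf : f ∈ Jf k e d r s) (i : Fin 3) : X i * f ∈ If k e d r s := by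
  rw [← sub_add_cancel f (extraPart e d r s f), mul_add, extraPart, Finset.mul_sum]
  exact add_mem (Ideal.mul_mem_left _ _ (sub_extraPart_mem_If_of_mem_Jf hs he hf))
    (sum_mem fun j _ => X_mul_monomial_extraExp_mem_If hs he j.isLt i _)

theorem mul_mem_If_of_mem_Jf (hs : s < d) (he : r ≤ s + e) {f q : MvPolynomial (Fin 3) k}
    (hf : f ∈ Jf k e d r s) (hq : constantCoeff q = 0) : q * f ∈ If k e d r s := by
  have hz : ∀ i, (X i : MvPolynomial (Fin 3) k) • Ideal.Quotient.mk (If k e d r s) f = 0 :=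
    fun i => Ideal.Quotient.eq_zero_iff_mem.2 (X_mul_mem_If_of_mem_Jf hs he hf i)
  have hqf := smul_eq_constantCoeff_smul hz q
  rw [hq, zero_smul] at hqf
  exact Ideal.Quotient.eq_zero_iff_mem.1 hqf

theorem coeff_extraExp_mul_of_mem_Jf (hs : s < d) (he : r ≤ s + e) (hj : j < r - d)
    {f : MvPolynomial (Fin 3) k} (hf : f ∈ Jf k e d r s) (q : MvPolynomial (Fin 3) k) :
    coeff (extraExp e d s j) (q * f) = constantCoeff q * coeff (extraExp e d s j) f := by
  have hmem := mul_mem_If_of_mem_Jf hs he hf (q := q - C (constantCoeff q)) (by simp)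
  rw [← sub_eq_zero, ← coeff_C_mul, ← coeff_sub, ← sub_mul]
  exact coeff_extraExp_eq_zero_of_mem_If hs he hj hmem

end extra

def gradedSocle (k : Type*) [Field k] (I : Ideal (MvPolynomial (Fin 3) k)) (n : ℕ) :
    Submodule k (MvPolynomial (Fin 3) k ⧸ I) where
  carrier := {z | z ∈ quotPiece k I n ∧ ∀ i, (X i : MvPolynomial (Fin 3) k) • z = 0}
  add_mem' ha hb := ⟨add_mem ha.1 hb.1, fun i => by rw [smul_add, ha.2 i, hb.2 i, add_zero]⟩
  zero_mem' := ⟨zero_mem _, fun _ => smul_zero _⟩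
  smul_mem' c _ hz :=
    ⟨Submodule.smul_mem _ c hz.1, fun i => by rw [smul_comm, hz.2 i, smul_zero]⟩

noncomputable def extraClass (k : Type*) [Field k] (e d r s : ℕ) (j : Fin (r - d)) :
    MvPolynomial (Fin 3) k ⧸ If k e d r s :=
  Ideal.Quotient.mk _ (A k e (d - s + j))

section socle

variable {k : Type*} [Field k] {e d r s : ℕ}

theorem mk_sum_monomial_extraExp (c : Fin (r - d) → k) :
    Ideal.Quotient.mk (If k e d r s) (∑ j : Fin (r - d), monomial (extraExp e d s j) (c j)) =
      ∑ j, c j • extraClass k e d r s j := by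
  simp only [extraClass, map_sum, A_eq_monomial_extraExp]
  refine Finset.sum_congr rfl fun j _ => ?_
  rw [← Ideal.Quotient.mkₐ_eq_mk k, ← map_smul, smul_monomial, smul_eq_mul, mul_one]

theorem extraClass_mem_gradedSocle (hs : s < d) (he : r ≤ s + e) (j : Fin (r - d)) :
    extraClass k e d r s j ∈ gradedSocle k (If k e d r s) e := by
  refine ⟨⟨A k e (d - s + j), isHomogeneous_A (by omega), rfl⟩, fun i => ?_⟩
  rw [extraClass, A_eq_monomial_extraExp]
  exact Ideal.Quotient.eq_zero_iff_mem.2 (X_mul_monomial_extraExp_mem_If hs he j.isLt i 1)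

theorem gradedSocle_le_span_extraClass (hs : s < d) :
    gradedSocle k (If k e d r s) e ≤ Submodule.span k (Set.range (extraClass k e d r s)) := by
  rintro _ ⟨⟨p, hp, rfl⟩, hX⟩
  have hsub := sub_extraPart_mem_If_of_X_zero_mul_mem hs hp
    (Ideal.Quotient.eq_zero_iff_mem.1 (hX 0))
  rw [AlgHom.toLinearMap_apply, Ideal.Quotient.mkₐ_eq_mk, ← sub_add_cancel p (extraPart e d r s p),
    map_add, Ideal.Quotient.eq_zero_iff_mem.2 hsub, zero_add, extraPart, mk_sum_monomial_extraExp]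
  exact sum_mem fun j _ => Submodule.smul_mem _ _ (Submodule.subset_span ⟨j, rfl⟩)

theorem span_extraClass_eq_gradedSocle (hs : s < d) (he : r ≤ s + e) :
    Submodule.span k (Set.range (extraClass k e d r s)) = gradedSocle k (If k e d r s) e :=
  le_antisymm (Submodule.span_le.2 (Set.range_subset_iff.2 (extraClass_mem_gradedSocle hs he)))
    (gradedSocle_le_span_extraClass hs)

theorem linearIndependent_extraClass (hs : s < d) (he : r ≤ s + e) :
    LinearIndependent k (extraClass k e d r s) := by
  refine Fintype.linearIndependent_iff.2 fun c hc i => ?_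
  have hmem : ∑ j : Fin (r - d), monomial (extraExp e d s j) (c j) ∈ If k e d r s := by
    rw [← Ideal.Quotient.eq_zero_iff_mem, mk_sum_monomial_extraExp, hc]
  rw [← coeff_extraExp_sum_monomial c i]
  exact coeff_extraExp_eq_zero_of_mem_If hs he i.isLt hmem

noncomputable def extraBasis (hs : s < d) (he : r ≤ s + e) :
    Module.Basis (Fin (r - d)) k (gradedSocle k (If k e d r s) e) :=
  (Module.Basis.span (linearIndependent_extraClass hs he)).map
    (LinearEquiv.ofEq _ _ (span_extraClass_eq_gradedSocle hs he))

end socle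

abbrev JfModIf (k : Type*) [Field k] (e d r s : ℕ) : Type _ :=
  ↥(Jf k e d r s) ⧸ Submodule.comap (Jf k e d r s).subtype (If k e d r s)

namespace JfModIf

variable {k : Type*} [Field k] {e d r s : ℕ}

noncomputable def extraGen (hs : s < d) (he : r ≤ s + e) (j : Fin (r - d)) :
    JfModIf k e d r s :=
  Submodule.Quotient.mk ⟨A k e (d - s + j), A_mem_Jf (by omega) (by omega)⟩

theorem X_smul_mk_eq_zero (hs : s < d) (he : r ≤ s + e) (f : Jf k e d r s) (i : Fin 3) :
    (X i : MvPolynomial (Fin 3) k) • (Submodule.Quotient.mk f : JfModIf k e d r s) = 0 := by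
  rw [← Submodule.Quotient.mk_smul, Submodule.Quotient.mk_eq_zero, Submodule.mem_comap]
  exact X_mul_mem_If_of_mem_Jf hs he f.2 i

theorem mk_eq_sum_extraGen (hs : s < d) (he : r ≤ s + e) (f : Jf k e d r s) :
    (Submodule.Quotient.mk f : JfModIf k e d r s) =
      ∑ j : Fin (r - d), (C (coeff (extraExp e d s j) (f : MvPolynomial (Fin 3) k)) :
        MvPolynomial (Fin 3) k) • extraGen hs he j := by
  simp only [extraGen, ← Submodule.mkQ_apply, ← map_smul, ← map_sum]
  rw [Submodule.mkQ_apply, Submodule.mkQ_apply, Submodule.Quotient.eq, Submodule.mem_comap]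
  convert sub_extraPart_mem_If_of_mem_Jf hs he f.2 using 2
  simp [extraPart, A_eq_monomial_extraExp, C_mul_monomial]

theorem span_extraGen_eq_top (hs : s < d) (he : r ≤ s + e) :
    Submodule.span (MvPolynomial (Fin 3) k) (Set.range (extraGen (k := k) hs he)) = ⊤ := by
  refine eq_top_iff.2 fun z _ => ?_
  obtain ⟨f, rfl⟩ := Submodule.Quotient.mk_surjective _ z
  rw [mk_eq_sum_extraGen hs he]
  exact sum_mem fun j _ => Submodule.smul_mem _ _ (Submodule.subset_span ⟨j, rfl⟩)

end JfModIf

section hom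

open JfModIf

variable {k : Type*} [Field k] {e d r s : ℕ}

theorem apply_extraGen_mem_gradedSocle (hs : s < d) (he : r ≤ s + e)
    (φ : HomQuot0 k (Jf k e d r s) (If k e d r s)) (j : Fin (r - d)) :
    φ.1 (extraGen hs he j) ∈ gradedSocle k (If k e d r s) e :=
  ⟨φ.2 e _ (isHomogeneous_A (by omega)), fun i => by
    rw [← map_smul, extraGen, X_smul_mk_eq_zero hs he, map_zero]⟩

noncomputable def evalExtraGen (hs : s < d) (he : r ≤ s + e) :
    HomQuot0 k (Jf k e d r s) (If k e d r s) →ₗ[k]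
      (Fin (r - d) → gradedSocle k (If k e d r s) e) where
  toFun φ j := ⟨φ.1 (extraGen hs he j), apply_extraGen_mem_gradedSocle hs he φ j⟩
  map_add' _ _ := rfl
  map_smul' _ _ := rfl

theorem evalExtraGen_injective (hs : s < d) (he : r ≤ s + e) :
    Function.Injective (evalExtraGen (k := k) hs he) :=
  fun _ _ h => Subtype.ext <| LinearMap.ext_on_range (span_extraGen_eq_top hs he)
    fun j => congrArg Subtype.val (congrFun h j)

noncomputable def liftSocle (hs : s < d) (he : r ≤ s + e)
    (y : Fin (r - d) → gradedSocle k (If k e d r s) e) :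
    Jf k e d r s →ₗ[MvPolynomial (Fin 3) k] MvPolynomial (Fin 3) k ⧸ If k e d r s where
  toFun f := ∑ j : Fin (r - d),
    coeff (extraExp e d s j) (f : MvPolynomial (Fin 3) k) • (y j : MvPolynomial (Fin 3) k ⧸ _)
  map_add' f g := by
    simp only [Submodule.coe_add, coeff_add, add_smul, Finset.sum_add_distrib]
  map_smul' p f := by
    simp only [Submodule.coe_smul, smul_eq_mul, RingHom.id_apply, Finset.smul_sum, mul_smul,
      coeff_extraExp_mul_of_mem_Jf hs he (Fin.isLt _) f.2]
    refine Finset.sum_congr rfl fun j _ => ?_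
    rw [smul_comm p, smul_eq_constantCoeff_smul (y j).2.2 p, smul_comm]

theorem liftSocle_apply (hs : s < d) (he : r ≤ s + e)
    (y : Fin (r - d) → gradedSocle k (If k e d r s) e) (f : Jf k e d r s) :
    liftSocle hs he y f = ∑ j : Fin (r - d),
      coeff (extraExp e d s j) (f : MvPolynomial (Fin 3) k) • (y j : MvPolynomial (Fin 3) k ⧸ _) :=
  rfl

theorem comap_le_ker_liftSocle (hs : s < d) (he : r ≤ s + e)
    (y : Fin (r - d) → gradedSocle k (If k e d r s) e) :
    Submodule.comap (Jf k e d r s).subtype (If k e d r s) ≤ LinearMap.ker (liftSocle hs he y) := by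
  intro f hf
  rw [LinearMap.mem_ker, liftSocle_apply]
  refine Finset.sum_eq_zero fun j _ => ?_
  rw [coeff_extraExp_eq_zero_of_mem_If hs he j.isLt (p := (f : MvPolynomial (Fin 3) k)) hf,
    zero_smul]

noncomputable def homOfSocle (hs : s < d) (he : r ≤ s + e)
    (y : Fin (r - d) → gradedSocle k (If k e d r s) e) :
    JfModIf k e d r s →ₗ[MvPolynomial (Fin 3) k] MvPolynomial (Fin 3) k ⧸ If k e d r s :=
  Submodule.liftQ _ (liftSocle hs he y) (comap_le_ker_liftSocle hs he y)

theorem homOfSocle_mem_homQuot0 (hs : s < d) (he : r ≤ s + e)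
    (y : Fin (r - d) → gradedSocle k (If k e d r s) e) :
    homOfSocle hs he y ∈ HomQuot0 k (Jf k e d r s) (If k e d r s) := by
  intro n f hf
  rw [homOfSocle, Submodule.liftQ_apply, liftSocle_apply]
  by_cases hn : n = e
  · subst hn
    exact sum_mem fun j _ => Submodule.smul_mem _ _ (y j).2.1
  · rw [Finset.sum_eq_zero fun j _ => ?_]
    · exact zero_mem _
    rw [hf.coeff_eq_zero, zero_smul]
    simp only [Finsupp.degree_fin_three, extraExp, tripleExp_apply_zero, tripleExp_apply_one,
      tripleExp_apply_two]
    omega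

theorem homOfSocle_extraGen (hs : s < d) (he : r ≤ s + e)
    (y : Fin (r - d) → gradedSocle k (If k e d r s) e) (j : Fin (r - d)) :
    homOfSocle hs he y (extraGen hs he j) = y j := by
  classical
  simp only [extraGen, homOfSocle, Submodule.liftQ_apply, liftSocle_apply,
    A_eq_monomial_extraExp, coeff_monomial, extraExp_injective.eq_iff, Fin.val_inj, ite_smul,
    one_smul, zero_smul, Finset.sum_ite_eq, Finset.mem_univ, if_true]

theorem evalExtraGen_surjective (hs : s < d) (he : r ≤ s + e) :
    Function.Surjective (evalExtraGen (k := k) hs he) :=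
  fun y => ⟨⟨_, homOfSocle_mem_homQuot0 hs he y⟩,
    funext fun j => Subtype.ext (homOfSocle_extraGen hs he y j)⟩

noncomputable def homQuot0EquivPiSocle (hs : s < d) (he : r ≤ s + e) :
    HomQuot0 k (Jf k e d r s) (If k e d r s) ≃ₗ[k]
      (Fin (r - d) → gradedSocle k (If k e d r s) e) :=
  LinearEquiv.ofBijective (evalExtraGen hs he)
    ⟨evalExtraGen_injective hs he, evalExtraGen_surjective hs he⟩

end hom

theorem finrank_homQuot0_eq_general (k : Type*) [Field k]
    (e d r s : ℕ) (hs : s = (e+1).choose 2)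
    (h1 : s < d) (h3 : r < (e+2).choose 2) :
    Module.finrank k ↥(HomQuot0 k (Jf k e d r s) (If k e d r s)) = (r - d) ^ 2 := by
  have he : r ≤ s + e := by
    rw [Nat.choose_succ_succ', Nat.choose_one_right, ← hs] at h3
    omega
  rw [((homQuot0EquivPiSocle (k := k) h1 he).trans
    (LinearEquiv.piCongrRight fun _ => (extraBasis h1 he).equivFun)).finrank_eq,
    Module.finrank_pi_fintype]
  simp [sq]

theorem finrank_homQuot0_eq (k : Type*) [Field k] [IsAlgClosed k]
    (e d r s : ℕ) (hs : s = (e+1).choose 2)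
    (h1 : s < d) (h2 : d < r) (h3 : r < (e+2).choose 2) (h4 : r - d ≤ d - s) :
    Module.finrank k ↥(HomQuot0 k (Jf k e d r s) (If k e d r s)) = (r - d) ^ 2 :=
  finrank_homQuot0_eq_general k e d r s hs h1 h3
end
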